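/- Every subharmonic function V on an open set Ω ⊆ ℂ which is piecewise harmonic with respect to finitely many harmonic functions H₁, …, H_k (relative to the null set supp(ΔV)) is continuous on Ω. -/

import Mathlib

open MeasureTheory Metric

/-- A function is harmonic on `s` if near each point of `s` it is the real part of a
holomorphic function. -/
def HarmonicOn (f : ℂ → ℝ) (s : Set ℂ) : Prop :=
  ∀ z ∈ s, ∃ ε > 0, ∃ g : ℂ → ℂ, DifferentiableOn ℂ g (ball z ε) ∧
    ∀ w ∈ ball z ε ∩ s, f w = (g w).re

/-- Subharmonic: upper semicontinuous and satisfying the sub-mean-value inequality. -/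
def SubharmonicOn (f : ℂ → ℝ) (s : Set ℂ) : Prop :=
  UpperSemicontinuousOn f s ∧
    ∀ z ∈ s, ∀ r > 0, closedBall z r ⊆ s →
      f z ≤ (1 / (2 * Real.pi)) * ∫ θ in (0:ℝ)..(2 * Real.pi),
        f (z + r * Complex.exp (θ * Complex.I))
/-!
Only lower semicontinuity at a point `z₀` is at stake. Near `z₀` and off the null set `K`, `V`
agrees with one of finitely many functions `H i` continuous at `z₀`; those with `H i z₀ < V z₀`
stay below `V z₀ - a` for a fixed `a > 0`, the others stay above `V z₀ - ε`. So on the open set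
`Λ = {V < V z₀ - ε}` near `z₀` we have `V ≤ V z₀ - a` off `K`, hence everywhere on `Λ`: by polar
coordinates almost every circle meets `K` in a null set of angles, and the sub-mean-value
inequality applies on such circles. If `Λ` reached too close to `z₀`, take `x ∈ Λ` and a nearest
point `q ∉ Λ`: then `V q ≥ V z₀ - ε`, yet a circle about `q` of radius at most `|x - q|` spends
an arc of length at least `1` in the ball `B(x, |x - q|) ⊆ Λ`, and the mean value inequality
forces `V q < V z₀ - ε` once `16 ε ≤ a`.
-/

open Set Filter Topology Real

theorem HarmonicOn.continuousOn {f : ℂ → ℝ} {s : Set ℂ} (hf : HarmonicOn f s) :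
    ContinuousOn f s := by
  intro z hz
  obtain ⟨ε, hε, g, hg, hfg⟩ := hf z hz
  have hgz : ContinuousAt (fun w => (g w).re) z :=
    Complex.continuous_re.continuousAt.comp (hg.continuousOn.continuousAt (ball_mem_nhds z hε))
  refine hgz.continuousWithinAt.congr_of_eventuallyEq ?_ (hfg z ⟨mem_ball_self hε, hz⟩)
  filter_upwards [inter_mem_nhdsWithin s (ball_mem_nhds z hε)] with w hw
  exact hfg w ⟨hw.2, hw.1⟩

theorem exists_gap_of_continuousAt {X ι : Type*} [TopologicalSpace X] [Finite ι]
    {H : ι → X → ℝ} {x₀ : X} (hH : ∀ i, ContinuousAt (H i) x₀) (m : ℝ) :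
    ∃ a > 0, ∀ ε > 0, ∀ᶠ x in 𝓝 x₀, ∀ i, H i x < m - ε → H i x ≤ m - a := by
  have hgap : ∀ i, ∀ᶠ a in 𝓝[>] (0 : ℝ), ∀ ε > 0, ∀ᶠ x in 𝓝 x₀,
      H i x < m - ε → H i x ≤ m - a := by
    intro i
    rcases lt_or_ge (H i x₀) m with h | h
    · filter_upwards [Ioo_mem_nhdsGT (sub_pos.2 h)] with a ha ε _
      filter_upwards [(hH i).eventually (gt_mem_nhds (show H i x₀ < m - a by linarith [ha.2]))]
        with x hx _ using hx.le
    · refine Eventually.of_forall fun a ε hε => ?_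
      filter_upwards [(hH i).eventually (lt_mem_nhds (show m - ε < H i x₀ by linarith))]
        with x hx hlt
      linarith
  obtain ⟨a, hall, ha⟩ := ((eventually_all.2 hgap).and self_mem_nhdsWithin).exists
  exact ⟨a, ha, fun ε hε => eventually_all.2 fun i => hall i ε hε⟩

theorem exists_eventually_forall_le_of_continuousAt {X ι : Type*} [TopologicalSpace X]
    [Finite ι] {H : ι → X → ℝ} {x₀ : X} (hH : ∀ i, ContinuousAt (H i) x₀) :
    ∃ A, ∀ᶠ x in 𝓝 x₀, ∀ i, A ≤ H i x := by
  have : ∀ i, ∀ᶠ A in atBot, ∀ᶠ x in 𝓝 x₀, A ≤ H i x := fun i => by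
    filter_upwards [eventually_lt_atBot (H i x₀)] with A hA
    exact (hH i).eventually (eventually_ge_nhds hA)
  obtain ⟨A, hA⟩ := (eventually_all.2 this).exists
  exact ⟨A, eventually_all.2 hA⟩

theorem integral_le_of_ae_le_of_ae_le_on {α : Type*} [MeasurableSpace α] {μ : Measure α}
    [IsFiniteMeasure μ] {g : α → ℝ} (hg : Integrable g μ) {T : Set α} (hT : MeasurableSet T)
    {B L : ℝ} (hB : ∀ᵐ x ∂μ, g x ≤ B) (hL : ∀ᵐ x ∂μ, x ∈ T → g x ≤ L) :
    ∫ x, g x ∂μ ≤ B * μ.real univ - (B - L) * μ.real T := by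
  have hstep : Integrable (T.indicator fun _ => B - L) μ := (integrable_const _).indicator hT
  calc ∫ x, g x ∂μ ≤ ∫ x, (B - T.indicator (fun _ => B - L) x) ∂μ := by
        refine integral_mono_ae hg ((integrable_const B).sub hstep) ?_
        filter_upwards [hB, hL] with x hxB hxL
        by_cases hx : x ∈ T
        · simp only [indicator_of_mem hx]; linarith [hxL hx]
        · simpa [indicator_of_notMem hx] using hxB
    _ = B * μ.real univ - (B - L) * μ.real T := by
        rw [integral_sub (integrable_const B) hstep, integral_const, integral_indicator_const _ hT]
        simp only [smul_eq_mul]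
        ring

theorem ae_ae_circleMap_notMem {K : Set ℂ} (hK : volume K = 0) (c : ℂ) :
    ∀ᵐ r ∂volume.restrict (Ioi 0), ∀ᵐ θ ∂volume.restrict (Ioo (-π) π), circleMap c r θ ∉ K := by
  obtain ⟨N, hKN, hNm, hN0⟩ := exists_measurable_superset_of_null hK
  set N' : Set ℂ := (c + ·) ⁻¹' N
  have hN'm : MeasurableSet N' := measurable_const_add c hNm
  have hN'0 : volume N' = 0 := by rw [measure_preimage_add]; exact hN0
  have hmeas : Measurable fun p : ℝ × ℝ =>
      ENNReal.ofReal p.1 • N'.indicator (1 : ℂ → ENNReal) (Complex.polarCoord.symm p) := by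
    refine measurable_fst.ennreal_ofReal.smul ((measurable_one.indicator hN'm).comp ?_)
    rw [show ⇑Complex.polarCoord.symm = _ from funext Complex.polarCoord_symm_apply]
    fun_prop
  have hzero := (Complex.lintegral_comp_polarCoord_symm (N'.indicator (1 : ℂ → ENNReal))).trans
    ((lintegral_indicator_one hN'm).trans hN'0)
  rw [lintegral_eq_zero_iff hmeas, polarCoord_target, Measure.volume_eq_prod,
    ← Measure.prod_restrict] at hzero
  filter_upwards [Measure.ae_ae_of_ae_prod hzero, ae_restrict_mem measurableSet_Ioi] with r hr hr0
  filter_upwards [hr] with θ hθ hθK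
  have hmem : Complex.polarCoord.symm (r, θ) ∈ N' := by
    show c + _ ∈ N
    convert hKN hθK using 1
    simp [circleMap, Complex.exp_mul_I]
  rw [indicator_of_mem hmem] at hθ
  exact not_le.2 hr0 (by simpa [ENNReal.ofReal_eq_zero] using hθ)

theorem exists_radius_ae_circleMap_notMem {K : Set ℂ} (hK : volume K = 0) (c : ℂ) {v : ℝ}
    (hv : 0 < v) :
    ∃ r ∈ Ioc 0 v, ∀ᵐ θ ∂volume.restrict (Ioo (-π) π), circleMap c r θ ∉ K := by
  have h := ae_restrict_of_ae_restrict_of_subset (Ioc_subset_Ioi_self : Ioc (0 : ℝ) v ⊆ Ioi 0)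
    (ae_ae_circleMap_notMem hK c)
  have : (ae (volume.restrict (Ioc 0 v))).NeBot := ae_restrict_neBot.2 (by simp [hv])
  obtain ⟨r, hr, hmem⟩ := (h.and (ae_restrict_mem measurableSet_Ioc)).exists
  exact ⟨r, hmem, hr⟩

theorem one_le_volume_circleMap_preimage_ball {x q : ℂ} {r : ℝ} (hr : 0 < r)
    (hrd : r ≤ dist x q) :
    1 ≤ (volume.restrict (Ioo (-π) π)).real (circleMap q r ⁻¹' ball x (dist x q)) := by
  set d := dist x q
  set β := Complex.arg (x - q)
  have hxq : x - q = d * Complex.exp (β * Complex.I) := by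
    rw [show d = ‖x - q‖ from Complex.dist_eq x q]; exact (Complex.norm_mul_exp_arg_mul_I _).symm
  have hnear : ∀ θ, |θ - β| < 1 → circleMap q r θ ∈ ball x d := by
    intro θ hθ
    have hsplit : circleMap q r θ - x = Complex.exp (β * Complex.I) *
        (r * (Complex.exp (Complex.I * (θ - β : ℝ)) - 1) - (d - r : ℝ)) := by
      rw [circleMap, show q + r * Complex.exp (θ * Complex.I) - x
        = r * Complex.exp (θ * Complex.I) - (x - q) by ring, hxq,
        show (θ : ℂ) * Complex.I = β * Complex.I + Complex.I * (θ - β : ℝ) by push_cast; ring,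
        Complex.exp_add]
      push_cast
      ring
    have hexp : ‖Complex.exp (Complex.I * (θ - β : ℝ)) - 1‖ < 1 :=
      Real.norm_exp_I_mul_ofReal_sub_one_le.trans_lt (by rwa [Real.norm_eq_abs])
    rw [mem_ball, dist_eq_norm, hsplit, norm_mul, Complex.norm_exp_ofReal_mul_I, one_mul]
    calc _ ≤ ‖(r : ℂ) * (Complex.exp (Complex.I * (θ - β : ℝ)) - 1)‖ + ‖((d - r : ℝ) : ℂ)‖ :=
          norm_sub_le _ _
      _ = r * ‖Complex.exp (Complex.I * (θ - β : ℝ)) - 1‖ + (d - r) := by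
          rw [norm_mul, Complex.norm_real, Complex.norm_real, Real.norm_of_nonneg hr.le,
            Real.norm_of_nonneg (by linarith)]
      _ < r * 1 + (d - r) := by gcongr
      _ = d := by ring
  obtain ⟨s, hs⟩ : ∃ s, -π ≤ s ∧ s + 1 ≤ π ∧ β - 1 ≤ s ∧ s ≤ β := by
    have := Complex.neg_pi_lt_arg (x - q)
    have := Complex.arg_le_pi (x - q)
    have := pi_gt_three
    rcases le_total 0 β with hβ | hβ
    exacts [⟨β - 1, by grind⟩, ⟨β, by grind⟩]
  have hsub : Ioo s (s + 1) ⊆ Ioo (-π) π ∩ circleMap q r ⁻¹' ball x d := fun θ ⟨h1, h2⟩ =>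
    ⟨⟨by linarith, by linarith⟩, hnear θ (abs_lt.2 ⟨by linarith, by linarith⟩)⟩
  calc 1 = volume.real (Ioo s (s + 1)) := by simp
    _ = (volume.restrict (Ioo (-π) π)).real (Ioo s (s + 1)) := by
        rw [measureReal_restrict_apply measurableSet_Ioo,
          inter_eq_left.2 (hsub.trans inter_subset_left)]
    _ ≤ _ := measureReal_mono fun θ hθ => (hsub hθ).2

-- Angles range over `Ioo (-π) π`, the angular window of `Complex.polarCoord`.
theorem SubharmonicOn.le_integral_Ioo {V : ℂ → ℝ} {Ω : Set ℂ} (hV : SubharmonicOn V Ω) {c : ℂ}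
    {r : ℝ} (hr : 0 < r) (hcr : closedBall c r ⊆ Ω) :
    V c ≤ (2 * π)⁻¹ * ∫ θ in Ioo (-π) π, V (circleMap c r θ) := by
  have hper : Function.Periodic (fun θ => V (circleMap c r θ)) (2 * π) := fun θ => by
    simp only [periodic_circleMap c r θ]
  have hshift := hper.intervalIntegral_add_eq 0 (-π)
  rw [zero_add, show -π + 2 * π = π by ring] at hshift
  rw [← integral_Ioc_eq_integral_Ioo, ← intervalIntegral.integral_of_le (by linarith [pi_pos]),
    ← hshift, ← one_div]
  exact hV.2 c (hcr (mem_closedBall_self hr.le)) r hr hcr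

theorem SubharmonicOn.le_of_ae_le_on_circle {V : ℂ → ℝ} {Ω : Set ℂ}
    (hV : SubharmonicOn V Ω) {c : ℂ} {r : ℝ} (hr : 0 < r) (hcr : closedBall c r ⊆ Ω)
    {T : Set ℝ} (hT : MeasurableSet T) {A B L : ℝ}
    (hAB : ∀ᵐ θ ∂volume.restrict (Ioo (-π) π), A ≤ V (circleMap c r θ) ∧ V (circleMap c r θ) ≤ B)
    (hL : ∀ᵐ θ ∂volume.restrict (Ioo (-π) π), θ ∈ T → V (circleMap c r θ) ≤ L) :
    V c ≤ B - (B - L) * (volume.restrict (Ioo (-π) π)).real T / (2 * π) := by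
  have husc : UpperSemicontinuous fun θ => V (circleMap c r θ) :=
    upperSemicontinuousOn_univ_iff.1 <| hV.1.comp (continuous_circleMap c r).continuousOn
      fun θ _ => hcr (circleMap_mem_closedBall c hr.le θ)
  have hint : Integrable (fun θ => V (circleMap c r θ)) (volume.restrict (Ioo (-π) π)) := by
    refine Integrable.of_bound husc.measurable.aestronglyMeasurable (max |A| |B|) ?_
    filter_upwards [hAB] with θ hθ
    exact abs_le_max_abs_abs hθ.1 hθ.2
  have hbound := integral_le_of_ae_le_of_ae_le_on hint hT (hAB.mono fun _ h => h.2) hL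
  rw [measureReal_restrict_apply_univ, volume_real_Ioo_of_le (by linarith [pi_pos])] at hbound
  calc V c ≤ (2 * π)⁻¹ * ∫ θ in Ioo (-π) π, V (circleMap c r θ) := hV.le_integral_Ioo hr hcr
    _ ≤ (2 * π)⁻¹ * (B * (π - -π) - (B - L) * (volume.restrict (Ioo (-π) π)).real T) := by
        gcongr
    _ = B - (B - L) * (volume.restrict (Ioo (-π) π)).real T / (2 * π) := by
        field_simp
        ring

theorem SubharmonicOn.le_of_le_off_null {V : ℂ → ℝ} {Ω : Set ℂ} (hV : SubharmonicOn V Ω)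
    {K : Set ℂ} (hK : volume K = 0) {W : Set ℂ} (hW : IsOpen W) (hWΩ : W ⊆ Ω) {A L : ℝ}
    (hbd : ∀ z ∈ W \ K, A ≤ V z ∧ V z ≤ L) : ∀ z ∈ W, V z ≤ L := by
  intro z hz
  obtain ⟨ε, hε, hεW⟩ := Metric.isOpen_iff.1 hW z hz
  obtain ⟨r, ⟨hr, hrε⟩, hgood⟩ := exists_radius_ae_circleMap_notMem hK z (half_pos hε)
  have hrW : closedBall z r ⊆ W := (closedBall_subset_ball (by linarith)).trans hεW
  have := hV.le_of_ae_le_on_circle hr (hrW.trans hWΩ) MeasurableSet.empty (L := L)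
    (by filter_upwards [hgood] with θ hθ
        exact hbd _ ⟨hrW (circleMap_mem_closedBall z hr.le θ), hθ⟩)
    (by simp)
  simpa using this

theorem SubharmonicOn.le_sub_of_le_on_ball {V : ℂ → ℝ} {Ω : Set ℂ} (hV : SubharmonicOn V Ω)
    {K : Set ℂ} (hK : volume K = 0) {x q : ℂ} (hxq : x ≠ q) (hqΩ : closedBall q (dist x q) ⊆ Ω)
    {A B L : ℝ} (hLB : L ≤ B) (hAB : ∀ z ∈ closedBall q (dist x q) \ K, A ≤ V z ∧ V z ≤ B)
    (hL : ∀ z ∈ ball x (dist x q), V z ≤ L) :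
    V q ≤ B - (B - L) / (2 * π) := by
  obtain ⟨r, ⟨hr, hrd⟩, hgood⟩ := exists_radius_ae_circleMap_notMem hK q (dist_pos.2 hxq)
  have hrq : closedBall q r ⊆ closedBall q (dist x q) := closedBall_subset_closedBall hrd
  have hcircle := hV.le_of_ae_le_on_circle hr (hrq.trans hqΩ)
    ((isOpen_ball.preimage (continuous_circleMap q r)).measurableSet) (L := L)
    (by filter_upwards [hgood] with θ hθ
        exact hAB _ ⟨hrq (circleMap_mem_closedBall q hr.le θ), hθ⟩)
    (Eventually.of_forall fun θ hθ => hL _ hθ)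
  have harc := one_le_volume_circleMap_preimage_ball hr hrd
  calc V q ≤ _ := hcircle
    _ ≤ B - (B - L) * 1 / (2 * π) := by gcongr
    _ = B - (B - L) / (2 * π) := by rw [mul_one]

theorem SubharmonicOn.sub_le_of_gap {V : ℂ → ℝ} {Ω : Set ℂ} (hV : SubharmonicOn V Ω)
    {K : Set ℂ} (hK : volume K = 0) {z₀ : ℂ} {ρ : ℝ} (hρΩ : ball z₀ ρ ⊆ Ω) {ε a A : ℝ}
    (hε : 0 < ε) (hεa : 16 * ε ≤ a)
    (hup : ∀ z ∈ ball z₀ ρ, V z ≤ V z₀ + ε) (hlow : ∀ z ∈ ball z₀ ρ \ K, A ≤ V z)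
    (hgap : ∀ z ∈ ball z₀ ρ \ K, V z < V z₀ - ε → V z ≤ V z₀ - a) :
    ∀ z ∈ ball z₀ (ρ / 4), V z₀ - ε ≤ V z := by
  intro x hx
  by_contra! hxlt
  have hρ : 0 < ρ := by linarith [dist_nonneg.trans_lt (mem_ball.1 hx)]
  set Λ := ball z₀ ρ ∩ {z | V z < V z₀ - ε}
  have hΛ : IsOpen Λ := by
    obtain ⟨u, hu, hΩu⟩ := upperSemicontinuousOn_iff_preimage_Iio.1 hV.1 (V z₀ - ε)
    have : Λ = ball z₀ ρ ∩ u := calc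
      Λ = ball z₀ ρ ∩ (Ω ∩ V ⁻¹' Iio (V z₀ - ε)) := by
          rw [← inter_assoc, inter_eq_left.2 hρΩ]; rfl
      _ = ball z₀ ρ ∩ u := by rw [hΩu, ← inter_assoc, inter_eq_left.2 hρΩ]
    exact this ▸ isOpen_ball.inter hu
  have hΛle : ∀ z ∈ Λ, V z ≤ V z₀ - a :=
    hV.le_of_le_off_null hK hΛ (inter_subset_left.trans hρΩ) fun z hz =>
      ⟨hlow z ⟨hz.1.1, hz.2⟩, hgap z ⟨hz.1.1, hz.2⟩ hz.1.2⟩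
  have hz₀Λ : z₀ ∉ Λ := fun h => by linarith [show V z₀ < V z₀ - ε from h.2]
  have hxΛ : x ∈ Λ := ⟨ball_subset_ball (by linarith) hx, hxlt⟩
  obtain ⟨q, hqΛ, hxq⟩ := hΛ.isClosed_compl.exists_infDist_eq_dist ⟨z₀, hz₀Λ⟩ x
  have hballΛ : ball x (dist x q) ⊆ Λ := hxq ▸ ball_infDist_compl_subset
  have hdist : dist x q ≤ dist x z₀ := hxq ▸ infDist_le_dist_of_mem hz₀Λ
  have hqx : x ≠ q := fun h => hqΛ (h ▸ hxΛ)
  have hcl : closedBall q (dist x q) ⊆ ball z₀ ρ := fun z hz => by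
    have := mem_ball'.1 hx
    rw [mem_closedBall] at hz
    rw [mem_ball]
    linarith [dist_triangle z q z₀, dist_triangle_left q z₀ x, dist_comm x z₀]
  have hVq : V z₀ - ε ≤ V q := by
    by_contra! h
    exact hqΛ ⟨hcl (mem_closedBall_self dist_nonneg), h⟩
  have hbound := hV.le_sub_of_le_on_ball hK hqx (hcl.trans hρΩ) (by linarith)
    (fun z hz => ⟨hlow z ⟨hcl hz.1, hz.2⟩, hup z (hcl hz.1)⟩) fun z hz => hΛle z (hballΛ hz)
  have hdrop : 2 * ε < (V z₀ + ε - (V z₀ - a)) / (2 * π) := by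
    rw [lt_div_iff₀ (by positivity)]
    nlinarith [pi_le_four]
  linarith

theorem piecewise_harmonic_continuous_general (Ω K : Set ℂ) (hΩ : IsOpen Ω)
    (V : ℂ → ℝ) (hV : SubharmonicOn V Ω)
    (k : ℕ) (H : Fin k → ℂ → ℝ) (hH : ∀ i, HarmonicOn (H i) Ω)
    (hKnull : volume K = 0)
    (hpw : ∀ z ∈ Ω \ K, ∃ j, ∀ w ∈ connectedComponentIn (Ω \ K) z, V w = H j w) :
    ContinuousOn V Ω := by
  intro z₀ hz₀
  have hnhds : 𝓝[Ω] z₀ = 𝓝 z₀ := nhdsWithin_eq_nhds.2 (hΩ.mem_nhds hz₀)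
  refine continuousWithinAt_iff_lower_upperSemicontinuousWithinAt.2 ⟨fun y hy => ?_, hV.1 z₀ hz₀⟩
  have hHz₀ i : ContinuousAt (H i) z₀ := (hH i).continuousOn.continuousAt (hΩ.mem_nhds hz₀)
  have hlabel : ∀ z ∈ Ω \ K, ∃ i, V z = H i z := fun z hz =>
    (hpw z hz).imp fun i hi => hi z (mem_connectedComponentIn hz)
  obtain ⟨a, ha, hgap⟩ := exists_gap_of_continuousAt hHz₀ (V z₀)
  obtain ⟨A, hA⟩ := exists_eventually_forall_le_of_continuousAt hHz₀
  set ε := min (a / 16) ((V z₀ - y) / 2)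
  have hε : 0 < ε := lt_min (by positivity) (by linarith)
  have hup : ∀ᶠ z in 𝓝 z₀, V z < V z₀ + ε := hnhds ▸ hV.1 z₀ hz₀ _ (by linarith)
  obtain ⟨ρ, hρ, hball⟩ := Metric.eventually_nhds_iff_ball.1
    ((hΩ.eventually_mem hz₀).and ((hgap ε hε).and (hA.and hup)))
  have hlabel' : ∀ z ∈ ball z₀ ρ \ K, ∃ i, V z = H i z := fun z hz =>
    hlabel z ⟨(hball z hz.1).1, hz.2⟩
  have hlower := hV.sub_le_of_gap hKnull (fun z hz => (hball z hz).1) hε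
    (show 16 * ε ≤ a by linarith [min_le_left (a / 16) ((V z₀ - y) / 2)])
    (fun z hz => (hball z hz).2.2.2.le)
    (fun z hz => let ⟨i, hi⟩ := hlabel' z hz; hi ▸ (hball z hz.1).2.2.1 i)
    (fun z hz => let ⟨i, hi⟩ := hlabel' z hz; hi ▸ (hball z hz.1).2.1 i)
  rw [hnhds]
  filter_upwards [ball_mem_nhds z₀ (by positivity : 0 < ρ / 4)] with z hz
  linarith [hlower z hz, min_le_right (a / 16) ((V z₀ - y) / 2)]

/-- Theorem 2.7: every piecewise harmonic subharmonic function is continuous. -/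
theorem piecewise_harmonic_continuous (Ω K : Set ℂ) (hΩ : IsOpen Ω)
    (V : ℂ → ℝ) (hV : SubharmonicOn V Ω)
    (k : ℕ) (H : Fin k → ℂ → ℝ) (hH : ∀ i, HarmonicOn (H i) Ω)
    (hKcl : IsClosed K) (hKnull : volume K = 0)
    (hKsupp : ∀ z ∈ Ω, (z ∈ K ↔ ¬ ∃ ε > 0, ball z ε ⊆ Ω ∧ HarmonicOn V (ball z ε)))
    (hpw : ∀ z ∈ Ω \ K, ∃ j, ∀ w ∈ connectedComponentIn (Ω \ K) z, V w = H j w) :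
    ContinuousOn V Ω :=
  piecewise_harmonic_continuous_general Ω K hΩ V hV k H hH hKnull hpw
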